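/- Let μ̂₁,...,μ̂ᴷ be independent ℝᵖ-valued estimators of μ, and suppose for each j in a subset J ⊆ {1,...,K} with |J| ≥ (1-τ)K one has P(‖μ̂ⱼ - μ‖₂ > ε) ≤ p, where 0 < p < α < 1/2 and τ < (α-p)/(1-p). Then P(‖Gmed(μ̂₁,...,μ̂ᴷ) - μ‖₂ > C_α ε) ≤ exp(-K(1-τ)ψ((α-τ)/(1-τ), p)), where C_α = (1-α)/√(1-2α) and ψ(a,q) = (1-a)log((1-a)/(1-q)) + a log(a/q). -/

import Mathlib

open MeasureTheory ProbabilityTheory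

/-!
If the geometric median `z` of `x₁, …, x_K` lies at distance `D > ε` from `μ`, move it by
`t • (μ - z)`. For `x` in the ball `B(μ, ε)` the angle between `x - z` and `μ - z` has cosine at
least `√(D² - ε²) / D`, so the distance from `x` to the median decreases at rate `√(D² - ε²)`;
the distance from any other point increases at rate at most `D`. Minimality of `z` therefore forces
`#inside · √(D² - ε²) ≤ #outside · D`, which is incompatible with `#inside > (1 - α) K` once
`D > C_α ε`. Hence on the bad event at least `a |J|` of the independent estimators in `J` miss the
ball, `a = (α - τ)/(1 - τ)`, and the Chernoff bound for this Bernoulli count with the optimal tilt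
gives `exp (-|J| ψ(a, q)) ≤ exp (-K (1 - τ) ψ(a, q))`.
-/

/-- The binary Kullback–Leibler divergence between `Bernoulli(a)` and `Bernoulli(q)`. -/
noncomputable def psiKL (a q : ℝ) : ℝ :=
  (1 - a) * Real.log ((1 - a) / (1 - q)) + a * Real.log (a / q)

open Finset Filter Topology Real InformationTheory RealInnerProductSpace

section GeometricMedian

variable {E : Type*} [NormedAddCommGroup E] [InnerProductSpace ℝ E]

lemma norm_sub_smul_le (a m : E) (ha : a ≠ 0) (t : ℝ) :
    ‖a - t • m‖ ≤ ‖a‖ + (t ^ 2 * ‖m‖ ^ 2 - 2 * t * ⟪a, m⟫) / (2 * ‖a‖) := by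
  have hsq : ‖a - t • m‖ ^ 2 = ‖a‖ ^ 2 - 2 * t * ⟪a, m⟫ + t ^ 2 * ‖m‖ ^ 2 := by
    rw [norm_sub_sq_real, real_inner_smul_right, norm_smul, mul_pow, Real.norm_eq_abs, sq_abs]
    ring
  rw [← sub_le_iff_le_add', le_div_iff₀ (by positivity)]
  nlinarith [sq_nonneg (‖a - t • m‖ - ‖a‖)]

lemma sqrt_sq_sub_sq_mul_norm_le_inner {m w : E} {ε : ℝ} (hw : ‖w‖ ≤ ε) (hε : ε < ‖m‖) :
    √(‖m‖ ^ 2 - ε ^ 2) * ‖m + w‖ ≤ ⟪m + w, m⟫ := by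
  have hε0 : 0 ≤ ε := (norm_nonneg w).trans hw
  have hS : |⟪m, w⟫| ≤ ‖m‖ * ε :=
    (abs_real_inner_le_norm m w).trans (mul_le_mul_of_nonneg_left hw (norm_nonneg m))
  have hinner : ⟪m + w, m⟫ = ‖m‖ ^ 2 + ⟪m, w⟫ := by
    rw [inner_add_left, real_inner_self_eq_norm_sq, real_inner_comm]
  have hw2 : ‖w‖ ^ 2 ≤ ε ^ 2 := pow_le_pow_left₀ (norm_nonneg w) hw 2
  have hm2 : ε ^ 2 ≤ ‖m‖ ^ 2 := pow_le_pow_left₀ hε0 hε.le 2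
  rw [hinner]
  refine (pow_le_pow_iff_left₀ (by positivity) ?_ two_ne_zero).1 ?_
  · nlinarith [abs_le.1 hS]
  · rw [mul_pow, Real.sq_sqrt (sub_nonneg.2 hm2), norm_add_sq_real]
    -- the difference of the two sides is `(⟪m, w⟫ + ε²)² + (ε² - ‖w‖²)(‖m‖² - ε²)`
    nlinarith [sq_nonneg (⟪m, w⟫ + ε ^ 2), mul_nonneg (sub_nonneg.2 hw2) (sub_nonneg.2 hm2)]

lemma norm_sub_add_smul_le_of_norm_sub_le {x z μ : E} {ε t : ℝ} (hx : ‖x - μ‖ ≤ ε)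
    (hε : ε < ‖μ - z‖) (ht : 0 ≤ t) :
    ‖x - (z + t • (μ - z))‖ ≤
      ‖x - z‖ + (t ^ 2 * ‖μ - z‖ ^ 2 / (2 * (‖μ - z‖ - ε)) - t * √(‖μ - z‖ ^ 2 - ε ^ 2)) := by
  have hsplit : x - z = (μ - z) + (x - μ) := by abel
  have hdist : ‖μ - z‖ - ε ≤ ‖x - z‖ := by
    have := norm_sub_le_norm_sub_add_norm_sub μ x z
    rw [norm_sub_rev μ x] at this
    linarith
  have hpos : 0 < ‖x - z‖ := by linarith
  have hangle := sqrt_sq_sub_sq_mul_norm_le_inner hx hε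
  rw [← hsplit] at hangle
  rw [sub_add_eq_sub_sub]
  refine (norm_sub_smul_le _ _ (norm_pos_iff.1 hpos) t).trans ?_
  have hquad : t ^ 2 * ‖μ - z‖ ^ 2 / (2 * ‖x - z‖) ≤
      t ^ 2 * ‖μ - z‖ ^ 2 / (2 * (‖μ - z‖ - ε)) := by
    gcongr
  have hlin : t * √(‖μ - z‖ ^ 2 - ε ^ 2) ≤ 2 * t * ⟪x - z, μ - z⟫ / (2 * ‖x - z‖) := by
    rw [le_div_iff₀ (by positivity)]
    nlinarith [mul_le_mul_of_nonneg_left hangle ht]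
  rw [sub_div]
  linarith

lemma card_mul_sqrt_le_of_isMinOn {ι : Type*} [Fintype ι] {x : ι → E} {z μ : E} {ε : ℝ}
    (hz : IsMinOn (fun w => ∑ i, ‖x i - w‖) Set.univ z) (hε : ε < ‖μ - z‖) :
    (#{i | ‖x i - μ‖ ≤ ε} : ℝ) * √(‖μ - z‖ ^ 2 - ε ^ 2) ≤ #{i | ¬‖x i - μ‖ ≤ ε} * ‖μ - z‖ := by
  set D := ‖μ - z‖
  set R := √(D ^ 2 - ε ^ 2)
  set c := (#{i | ‖x i - μ‖ ≤ ε} : ℝ) * (D ^ 2 / (2 * (D - ε)))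
  -- moving `z` by `t • (μ - z)` changes the objective by at most `-t * (lhs - rhs) + t ^ 2 * c`
  have hstep : ∀ t > 0, (#{i | ‖x i - μ‖ ≤ ε} : ℝ) * R - #{i | ¬‖x i - μ‖ ≤ ε} * D ≤ t * c := by
    intro t ht
    have hpoint : ∀ i, ‖x i - (z + t • (μ - z))‖ ≤ ‖x i - z‖ +
        if ‖x i - μ‖ ≤ ε then t ^ 2 * D ^ 2 / (2 * (D - ε)) - t * R else t * D := by
      intro i
      split_ifs with hi
      · exact norm_sub_add_smul_le_of_norm_sub_le hi hε ht.le
      · calc ‖x i - (z + t • (μ - z))‖ ≤ ‖x i - z‖ + ‖t • (μ - z)‖ := by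
              rw [sub_add_eq_sub_sub]; exact norm_sub_le _ _
          _ = ‖x i - z‖ + t * D := by rw [norm_smul, Real.norm_of_nonneg ht.le]
    have hmin := (isMinOn_iff.1 hz (z + t • (μ - z)) (Set.mem_univ _)).trans
      (Finset.sum_le_sum fun i _ => hpoint i)
    rw [Finset.sum_add_distrib, Finset.sum_ite, Finset.sum_const, Finset.sum_const,
      nsmul_eq_mul, nsmul_eq_mul] at hmin
    have key : t * ((#{i | ‖x i - μ‖ ≤ ε} : ℝ) * R - #{i | ¬‖x i - μ‖ ≤ ε} * D) ≤ t * (t * c) := by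
      simp only [c]
      rw [mul_div_assoc] at hmin
      linarith
    exact le_of_mul_le_mul_left key ht
  have hlim : Tendsto (fun t => t * c) (𝓝[>] 0) (𝓝 0) := by
    have hcont : Continuous fun t : ℝ => t * c := continuous_id.mul continuous_const
    exact (hcont.tendsto' 0 0 (zero_mul c)).mono_left nhdsWithin_le_nhds
  linarith [ge_of_tendsto hlim (eventually_nhdsWithin_of_forall hstep)]

theorem card_norm_sub_le_le_of_isMinOn {ι : Type*} [Fintype ι] {x : ι → E} {z μ : E}
    {α ε : ℝ} (hz : IsMinOn (fun w => ∑ i, ‖x i - w‖) Set.univ z) (hα : α < 1 / 2)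
    (hfar : (1 - α) / √(1 - 2 * α) * ε < ‖z - μ‖) :
    (#{i | ‖x i - μ‖ ≤ ε} : ℝ) ≤ (1 - α) * Fintype.card ι := by
  by_contra! hmaj
  set G := (#{i | ‖x i - μ‖ ≤ ε} : ℝ)
  set N := (Fintype.card ι : ℝ)
  set D := ‖μ - z‖
  rw [norm_sub_rev] at hfar
  have hGN : G + #{i | ¬‖x i - μ‖ ≤ ε} = N := by
    simp only [G, N]; exact_mod_cast card_filter_add_card_filter_not _
  have hG : 0 < G := lt_of_le_of_lt (mul_nonneg (by linarith) (Nat.cast_nonneg _)) hmaj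
  obtain ⟨i, hi⟩ : ∃ i, ‖x i - μ‖ ≤ ε := by
    simpa [G, Finset.card_pos, Finset.filter_nonempty_iff] using hG
  have hε : 0 ≤ ε := (norm_nonneg _).trans hi
  have hs : 0 < √(1 - 2 * α) := Real.sqrt_pos.2 (by linarith)
  have hC : 1 ≤ (1 - α) / √(1 - 2 * α) := by
    rw [one_le_div hs, Real.sqrt_le_left (by linarith)]
    nlinarith [sq_nonneg α]
  have hεD : ε < D := lt_of_le_of_lt (le_mul_of_one_le_left hε hC) hfar
  set R := √(D ^ 2 - ε ^ 2)
  have hR : 0 ≤ R := Real.sqrt_nonneg _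
  have hcount := card_mul_sqrt_le_of_isMinOn hz hεD
  have hRD : (1 - α) * R < α * D := by
    have hN : 0 < N := by linarith
    have : N * ((1 - α) * R) < N * (α * D) := by
      nlinarith [mul_le_mul_of_nonneg_right hmaj.le hR]
    exact lt_of_mul_lt_mul_left this hN.le
  have hsq : (1 - 2 * α) * D ^ 2 < ((1 - α) * ε) ^ 2 := by
    have := pow_lt_pow_left₀ hRD (by nlinarith) two_ne_zero
    rw [mul_pow, Real.sq_sqrt (by nlinarith)] at this
    nlinarith
  have : √(1 - 2 * α) * D < (1 - α) * ε := by
    rw [← Real.sqrt_sq (by linarith : 0 ≤ D), ← Real.sqrt_mul (by linarith),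
      ← Real.sqrt_sq (by nlinarith : 0 ≤ (1 - α) * ε)]
    exact Real.sqrt_lt_sqrt (by nlinarith) hsq
  rw [div_mul_eq_mul_div, div_lt_iff₀ hs] at hfar
  linarith

end GeometricMedian

lemma psiKL_nonneg {a q : ℝ} (ha0 : 0 ≤ a) (ha1 : a ≤ 1) (hq0 : 0 < q) (hq1 : q < 1) :
    0 ≤ psiKL a q := by
  have hu : (1 - q) * ((1 - a) / (1 - q)) = 1 - a := mul_div_cancel₀ _ (by linarith)
  have hv : q * (a / q) = a := mul_div_cancel₀ _ hq0.ne'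
  have hklFun : psiKL a q = (1 - q) * klFun ((1 - a) / (1 - q)) + q * klFun (a / q) := by
    simp only [psiKL, klFun_apply]
    linear_combination (1 - log ((1 - a) / (1 - q))) * hu + (1 - log (a / q)) * hv
  rw [hklFun]
  have := klFun_nonneg (div_nonneg (by linarith : 0 ≤ 1 - a) (by linarith : 0 ≤ 1 - q))
  have := klFun_nonneg (div_nonneg ha0 hq0.le)
  positivity

-- `log (a (1 - q) / ((1 - a) q))` is the optimal tilt in the Chernoff bound for a sum of
-- `Bernoulli(q)` variables above the level `a`.
lemma exp_neg_mul_mul_one_add_eq_exp_neg_psiKL {a q : ℝ} (ha0 : 0 < a) (ha1 : a < 1) (hq0 : 0 < q)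
    (hq1 : q < 1) :
    exp (-log (a * (1 - q) / ((1 - a) * q)) * a) *
        (1 + (exp (log (a * (1 - q) / ((1 - a) * q))) - 1) * q) = exp (-psiKL a q) := by
  have h1a : 0 < 1 - a := by linarith
  have h1q : 0 < 1 - q := by linarith
  have hmgf : 1 + (exp (log (a * (1 - q) / ((1 - a) * q))) - 1) * q =
      exp (log ((1 - q) / (1 - a))) := by
    rw [exp_log (by positivity), exp_log (by positivity)]
    field_simp
    ring
  rw [hmgf, ← exp_add, psiKL]
  congr 1
  rw [log_div (by positivity) (by positivity), log_mul ha0.ne' h1q.ne', log_mul h1a.ne' hq0.ne',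
    log_div h1q.ne' h1a.ne', log_div h1a.ne' h1q.ne', log_div ha0.ne' hq0.ne']
  ring

lemma exp_mul_indicator_one {Ω : Type*} (A : Set Ω) (t : ℝ) (ω : Ω) :
    exp (t * A.indicator (fun _ => 1) ω) = 1 + A.indicator (fun _ => exp t - 1) ω := by
  by_cases hω : ω ∈ A <;> simp [hω]

namespace ProbabilityTheory

variable {Ω : Type*} [MeasurableSpace Ω] {P : Measure Ω}

lemma iIndepFun.iIndepSet_preimage {ι β : Type*} [MeasurableSpace β] {X : ι → Ω → β}
    (hX : iIndepFun X P) (hXm : ∀ i, Measurable (X i)) {B : Set β} (hB : MeasurableSet B) :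
    iIndepSet (fun i => X i ⁻¹' B) P :=
  (iIndepSet_iff_meas_biInter fun i => hXm i hB).2 fun S =>
    hX.measure_inter_preimage_eq_mul S fun _ _ => hB

variable [IsProbabilityMeasure P]

lemma mgf_indicator_one {A : Set Ω} (hA : MeasurableSet A) (t : ℝ) :
    mgf (A.indicator (fun _ => 1)) P t = 1 + (exp t - 1) * P.real A := by
  simp_rw [mgf, exp_mul_indicator_one]
  rw [integral_add (integrable_const 1)
    ((integrable_const _).indicator hA), integral_indicator_const _ hA]
  simp [mul_comm]

lemma integrable_exp_mul_indicator_one {A : Set Ω} (hA : MeasurableSet A) (t : ℝ) :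
    Integrable (fun ω => exp (t * A.indicator (fun _ => 1) ω)) P := by
  simp_rw [exp_mul_indicator_one]
  exact (integrable_const 1).add ((integrable_const _).indicator hA)

lemma iIndepSet.mgf_sum_indicator_le {ι : Type*} [Fintype ι] {A : ι → Set Ω}
    (hA : iIndepSet A P) (hAm : ∀ i, MeasurableSet (A i)) {q t : ℝ} (hq : 0 ≤ q) (ht : 0 ≤ t)
    (hPA : ∀ i, P (A i) ≤ ENNReal.ofReal q) :
    mgf (∑ i, (A i).indicator (fun _ => 1)) P t ≤ (1 + (exp t - 1) * q) ^ Fintype.card ι := by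
  rw [hA.iIndepFun_indicator.mgf_sum (fun i => measurable_const.indicator (hAm i)),
    ← Finset.card_univ, ← Finset.prod_const]
  refine Finset.prod_le_prod (fun _ _ => mgf_nonneg) fun i _ => ?_
  rw [mgf_indicator_one (hAm i)]
  have hPq : P.real (A i) ≤ q := ENNReal.toReal_le_of_le_ofReal hq (hPA i)
  have : 0 ≤ exp t - 1 := by linarith [one_le_exp ht]
  gcongr

open Classical in
theorem iIndepSet.measure_ge_le_exp_neg_psiKL {ι : Type*} [Fintype ι] {A : ι → Set Ω}
    (hA : iIndepSet A P) (hAm : ∀ i, MeasurableSet (A i)) {a q : ℝ} (hq : 0 < q) (hqa : q ≤ a)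
    (ha : a < 1) (hPA : ∀ i, P (A i) ≤ ENNReal.ofReal q) :
    P {ω | a * Fintype.card ι ≤ #{i | ω ∈ A i}} ≤
      ENNReal.ofReal (exp (-Fintype.card ι * psiKL a q)) := by
  set S : Ω → ℝ := ∑ i, (A i).indicator (fun _ => 1)
  have hS : ∀ ω, S ω = #{i | ω ∈ A i} := fun ω => by
    simp only [S, Finset.sum_apply, Set.indicator_apply, Finset.sum_boole]
  set t := log (a * (1 - q) / ((1 - a) * q))
  have ht : 0 ≤ t := log_nonneg <| by
    rw [le_div_iff₀ (mul_pos (by linarith) hq)]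
    nlinarith
  have hint : Integrable (fun ω => exp (t * S ω)) P :=
    hA.iIndepFun_indicator.integrable_exp_mul_sum (fun i => measurable_const.indicator (hAm i))
      fun i _ => integrable_exp_mul_indicator_one (hAm i) t
  have hchernoff := measure_ge_le_exp_mul_mgf (a * Fintype.card ι) ht hint
  simp only [hS] at hchernoff
  rw [← ofReal_measureReal]
  refine ENNReal.ofReal_le_ofReal (hchernoff.trans ?_)
  calc exp (-t * (a * Fintype.card ι)) * mgf S P t
      = exp (-t * a) ^ Fintype.card ι * mgf S P t := by rw [← exp_nat_mul]; ring_nf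
    _ ≤ exp (-t * a) ^ Fintype.card ι * (1 + (exp t - 1) * q) ^ Fintype.card ι := by
        gcongr
        exact hA.mgf_sum_indicator_le hAm hq.le ht hPA
    _ = exp (-Fintype.card ι * psiKL a q) := by
        rw [← mul_pow, exp_neg_mul_mul_one_add_eq_exp_neg_psiKL (hq.trans_le hqa) ha hq
          (hqa.trans_lt ha), ← exp_nat_mul]
        ring_nf

end ProbabilityTheory

lemma mul_card_le_card_filter_not_subtype {ι : Type*} [Fintype ι] {s : Finset ι} {p : ι → Prop}
    [DecidablePred p] {a : ℝ} (hp : (#{i | p i} : ℝ) ≤ (1 - a) * s.card) :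
    a * s.card ≤ #{i : s | ¬p i} := by
  have hsub : #{i : s | p i} ≤ #{i | p i} :=
    card_le_card_of_injOn Subtype.val (by intro i hi; simpa using hi) Subtype.val_injective.injOn
  have hsplit := card_filter_add_card_filter_not (s := (univ : Finset s)) (fun i => p i)
  rw [card_univ, Fintype.card_coe] at hsplit
  have : (s.card : ℝ) ≤ #{i : s | ¬p i} + #{i | p i} := by exact_mod_cast (by omega)
  linarith

theorem geometric_median_aggregation_general
    {Ω : Type*} [MeasurableSpace Ω] (P : Measure Ω) [IsProbabilityMeasure P]
    {p K : ℕ} (μhat : Fin K → Ω → EuclideanSpace ℝ (Fin p))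
    (μ : EuclideanSpace ℝ (Fin p)) (J : Finset (Fin K)) (τ α q ε : ℝ)
    (hq0 : 0 < q) (hqα : q < α) (hα : α < 1 / 2)
    (hτ : τ < (α - q) / (1 - q))
    (hJcard : (1 - τ) * (K : ℝ) ≤ (J.card : ℝ))
    (hmeas : ∀ j, Measurable (μhat j))
    (hindep : iIndepFun (fun j : J => μhat j) P)
    (hconc : ∀ j ∈ J, P {ω | ε < ‖μhat j ω - μ‖} ≤ ENNReal.ofReal q)
    (Gm : Ω → EuclideanSpace ℝ (Fin p))
    (hGm : ∀ ω,
      IsMinOn (fun z : EuclideanSpace ℝ (Fin p) => ∑ j, ‖μhat j ω - z‖) Set.univ (Gm ω)) :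
    P {ω | (1 - α) / Real.sqrt (1 - 2 * α) * ε < ‖Gm ω - μ‖} ≤
      ENNReal.ofReal (Real.exp (-(K : ℝ) * (1 - τ) * psiKL ((α - τ) / (1 - τ)) q)) := by
  have h1q : 0 < 1 - q := by linarith
  have h1τ : 0 < 1 - τ := by
    have : (α - q) / (1 - q) < 1 := by rw [div_lt_one h1q]; linarith
    linarith
  set a := (α - τ) / (1 - τ)
  have hqa : q ≤ a := by
    rw [le_div_iff₀ h1τ]
    rw [lt_div_iff₀ h1q] at hτ
    linarith
  have ha1 : a < 1 := by rw [div_lt_one h1τ]; linarith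
  have h1a : (1 - a) * (1 - τ) = 1 - α := by
    rw [sub_mul, one_mul, div_mul_cancel₀ _ h1τ.ne']; ring
  have hB : MeasurableSet {v : EuclideanSpace ℝ (Fin p) | ε < ‖v - μ‖} :=
    measurableSet_lt measurable_const (by fun_prop)
  have hchernoff := (hindep.iIndepSet_preimage (fun j => hmeas j) hB).measure_ge_le_exp_neg_psiKL
    (fun j => hmeas j hB) hq0 hqa ha1 fun j => hconc j j.2
  refine (measure_mono ?_).trans (hchernoff.trans ?_)
  · intro ω hω
    have hnear := card_norm_sub_le_le_of_isMinOn (hGm ω) hα hω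
    rw [Fintype.card_fin] at hnear
    have hJ := mul_card_le_card_filter_not_subtype (s := J) (p := fun i => ‖μhat i ω - μ‖ ≤ ε)
      (a := a) <| calc
        _ ≤ (1 - α) * K := hnear
        _ = (1 - a) * ((1 - τ) * K) := by rw [← h1a]; ring
        _ ≤ (1 - a) * J.card := by gcongr
    simpa [Fintype.card_coe, not_le] using hJ
  · rw [Fintype.card_coe]
    have hψ := psiKL_nonneg (hq0.le.trans hqa) ha1.le hq0 (hqa.trans_lt ha1)
    gcongr
    linarith

/-- Minsker's aggregation lemma under corruption: if among `μ̂₁,...,μ̂ᴷ` the estimators indexed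
by `J`, `|J| ≥ (1-τ)K`, are independent and each satisfies `P(‖μ̂ⱼ - μ‖₂ > ε) ≤ p`, with
`0 < p < α < 1/2` and `τ < (α-p)/(1-p)`, then the geometric median `Gm` satisfies
`P(‖Gm - μ‖₂ > C_α ε) ≤ exp(-K(1-τ)ψ((α-τ)/(1-τ), p))` with `C_α = (1-α)/√(1-2α)`. -/
theorem geometric_median_aggregation
    {Ω : Type*} [MeasurableSpace Ω] (P : Measure Ω) [IsProbabilityMeasure P]
    {p K : ℕ} (μhat : Fin K → Ω → EuclideanSpace ℝ (Fin p))
    (μ : EuclideanSpace ℝ (Fin p)) (J : Finset (Fin K)) (τ α q ε : ℝ)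
    (hq0 : 0 < q) (hqα : q < α) (hα : α < 1 / 2)
    (hτ0 : 0 ≤ τ) (hτ : τ < (α - q) / (1 - q))
    (hJcard : (1 - τ) * (K : ℝ) ≤ (J.card : ℝ))
    (hmeas : ∀ j, Measurable (μhat j))
    (hindep : iIndepFun (fun j : J => μhat j) P)
    (hconc : ∀ j ∈ J, P {ω | ε < ‖μhat j ω - μ‖} ≤ ENNReal.ofReal q)
    (Gm : Ω → EuclideanSpace ℝ (Fin p))
    (hGm : ∀ ω,
      IsMinOn (fun z : EuclideanSpace ℝ (Fin p) => ∑ j, ‖μhat j ω - z‖) Set.univ (Gm ω)) :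
    P {ω | (1 - α) / Real.sqrt (1 - 2 * α) * ε < ‖Gm ω - μ‖} ≤
      ENNReal.ofReal (Real.exp (-(K : ℝ) * (1 - τ) * psiKL ((α - τ) / (1 - τ)) q)) :=
  geometric_median_aggregation_general P μhat μ J τ α q ε hq0 hqα hα hτ hJcard hmeas hindep hconc Gm
    hGm
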